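/- For all non-negative integers m and n, the Bernoulli number B_{m+n} satisfies B_{m+n} = \sum_{k=0}^{n} \sum_{l=0}^{m} (-1)^{k+l} * k! * l! * S(n,k) * S(m,l) / ((k+l+1) * C(k+l, l)), where C(k+l, l) denotes the binomial coefficient. -/

import Mathlib

/-!
Write `c n k = (-1)^k k! S(n,k)`. The Stirling recurrence becomes `c (n+1) = D (c n)` for the
difference operator `(D c) k = k (c k - c (k-1))`, whose adjoint with respect to `∑ₖ c k g k` is
`(D* g) k = k g k - (k+1) g (k+1)`. The kernel `β k l = k! l! / (k+l+1)! = ∫₀¹ xᵏ (1-x)ˡ dx`,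
which is `1 / ((k+l+1) C(k+l,l))`, has `D*` acting the same way on both of its arguments, so
the pairing `⟨c n, c m⟩ = ∑ₖ ∑ₗ c n k * c m l * β k l` only depends on `n + m`. Hence it equals
`⟨c 0, c (n+m)⟩ = ∑ₗ c (n+m) l / (l+1)`, which is the classical formula for `B_{n+m}`: it satisfies
the recurrence `∑_{i<n} C(n,i) B_i = [n = 1]` because `∑ᵢ C(n,i) S(i,k) = S(n+1,k+1)`.
-/

/-- The Stirling numbers of the second kind `S(n,k)`, the number of ways of
partitioning a set of `n` elements into `k` nonempty sets. -/
def stirling2 : ℕ → ℕ → ℕ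
  | 0, 0 => 1
  | 0, _ + 1 => 0
  | _ + 1, 0 => 0
  | n + 1, k + 1 => (k + 1) * stirling2 n (k + 1) + stirling2 n k

open Finset
open scoped Nat

theorem stirling2_eq_stirlingSecond : stirling2 = Nat.stirlingSecond := by
  funext n k
  induction n generalizing k with
  | zero => cases k <;> rfl
  | succ n ih => cases k <;> simp [stirling2, Nat.stirlingSecond, ih]

theorem Nat.sum_range_choose_mul_stirlingSecond (n k : ℕ) :
    ∑ i ∈ range (n + 1), n.choose i * stirlingSecond i k = stirlingSecond (n + 1) (k + 1) := by
  induction n generalizing k with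
  | zero => simp [stirlingSecond_succ_succ]
  | succ n ih =>
    have h := sum_choose_succ_mul (R := ℕ) (fun i _ => stirlingSecond i k) n
    simp only [Nat.cast_id] at h
    rw [h, ih]
    cases k with
    | zero => simp [stirlingSecond_succ_succ]
    | succ k =>
      simp only [stirlingSecond_succ_succ, mul_add, sum_add_distrib, mul_left_comm _ (k + 1),
        ← mul_sum, ih]
      ring

theorem eq_bernoulli_of_sum_range_choose_mul {b : ℕ → ℚ}
    (hb : ∀ n, ∑ i ∈ range n, (n.choose i : ℚ) * b i = if n = 1 then 1 else 0) :
    b = bernoulli := by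
  funext n
  induction n using Nat.strong_induction_on with
  | _ n ih =>
    have h := (hb (n + 1)).trans (sum_bernoulli (n + 1)).symm
    rw [sum_range_succ, sum_range_succ, sum_congr rfl fun i hi => by rw [ih i (mem_range.1 hi)],
      add_left_cancel_iff] at h
    exact mul_left_cancel₀ (Nat.cast_ne_zero.2 (Nat.choose_pos n.le_succ).ne') h

def stirlingCoeff (n k : ℕ) : ℚ := (-1) ^ k * k ! * Nat.stirlingSecond n k

theorem stirlingCoeff_eq_zero_of_lt {n k : ℕ} (h : n < k) : stirlingCoeff n k = 0 := by
  simp [stirlingCoeff, Nat.stirlingSecond_eq_zero_of_lt h]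

@[simp]
theorem stirlingCoeff_zero_zero : stirlingCoeff 0 0 = 1 := by
  simp [stirlingCoeff]

@[simp]
theorem stirlingCoeff_succ_zero (n : ℕ) : stirlingCoeff (n + 1) 0 = 0 := by
  simp [stirlingCoeff]

theorem stirlingCoeff_succ_succ (n k : ℕ) :
    stirlingCoeff (n + 1) (k + 1) = (k + 1) * (stirlingCoeff n (k + 1) - stirlingCoeff n k) := by
  simp only [stirlingCoeff, Nat.stirlingSecond_succ_succ, pow_succ, Nat.factorial_succ]
  push_cast
  ring

theorem sum_range_choose_mul_stirlingCoeff (n k : ℕ) :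
    ∑ i ∈ range (n + 1), (n.choose i : ℚ) * stirlingCoeff i k =
      stirlingCoeff n k - stirlingCoeff n (k + 1) := by
  have h := Nat.sum_range_choose_mul_stirlingSecond n k
  rw [Nat.stirlingSecond_succ_succ] at h
  calc _ = (-1) ^ k * k ! *
        ((∑ i ∈ range (n + 1), n.choose i * Nat.stirlingSecond i k : ℕ) : ℚ) := by
        push_cast
        rw [mul_sum]
        exact sum_congr rfl fun i _ => by simp only [stirlingCoeff]; ring
    _ = _ := by
        rw [h]
        simp only [stirlingCoeff, pow_succ, Nat.factorial_succ]
        push_cast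
        ring

theorem sum_range_stirlingCoeff_mul_of_lt {n N : ℕ} (h : n < N) (g : ℕ → ℚ) :
    ∑ k ∈ range N, stirlingCoeff n k * g k = ∑ k ∈ range (n + 1), stirlingCoeff n k * g k := by
  refine (sum_subset (range_subset_range.2 h) fun k _ hk => ?_).symm
  rw [stirlingCoeff_eq_zero_of_lt (by simpa using hk), zero_mul]

theorem sum_range_stirlingCoeff_succ_div (n : ℕ) :
    ∑ k ∈ range (n + 1), stirlingCoeff n (k + 1) / (k + 1) = -(if n = 1 then 1 else 0) := by
  cases n with
  | zero => simp [stirlingCoeff_eq_zero_of_lt]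
  | succ m =>
    have h (k : ℕ) : stirlingCoeff (m + 1) (k + 1) / (k + 1) =
        stirlingCoeff m (k + 1) - stirlingCoeff m k := by
      rw [stirlingCoeff_succ_succ]
      field_simp
    rw [sum_congr rfl fun k _ => h k, sum_range_sub (stirlingCoeff m),
      stirlingCoeff_eq_zero_of_lt (by omega)]
    cases m <;> simp

theorem sum_range_choose_mul_sum_stirlingCoeff_div (n : ℕ) :
    ∑ i ∈ range n, (n.choose i : ℚ) * ∑ k ∈ range (i + 1), stirlingCoeff i k / (k + 1) =
      if n = 1 then 1 else 0 := by
  have key : ∑ i ∈ range (n + 1), (n.choose i : ℚ) *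
        ∑ k ∈ range (i + 1), stirlingCoeff i k / (k + 1) =
      ∑ k ∈ range (n + 1), (stirlingCoeff n k - stirlingCoeff n (k + 1)) / (k + 1) := by
    calc _ = ∑ i ∈ range (n + 1), (n.choose i : ℚ) *
          ∑ k ∈ range (n + 1), stirlingCoeff i k * (k + 1 : ℚ)⁻¹ := by
          refine sum_congr rfl fun i hi => ?_
          simp_rw [div_eq_mul_inv]
          rw [sum_range_stirlingCoeff_mul_of_lt (mem_range.1 hi)]
      _ = ∑ k ∈ range (n + 1), (∑ i ∈ range (n + 1), (n.choose i : ℚ) * stirlingCoeff i k) /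
          (k + 1) := by
          simp_rw [mul_sum, sum_div]
          rw [sum_comm]
          exact sum_congr rfl fun k _ => sum_congr rfl fun i _ => by ring
      _ = _ := by simp_rw [sum_range_choose_mul_stirlingCoeff]
  rw [sum_range_succ, Nat.choose_self, Nat.cast_one, one_mul, ← eq_sub_iff_add_eq] at key
  rw [key]
  simp_rw [sub_div, sum_sub_distrib, sum_range_stirlingCoeff_succ_div]
  ring

theorem bernoulli_eq_sum_stirlingCoeff_div (n : ℕ) :
    bernoulli n = ∑ k ∈ range (n + 1), stirlingCoeff n k / (k + 1) :=
  congrFun (eq_bernoulli_of_sum_range_choose_mul sum_range_choose_mul_sum_stirlingCoeff_div).symm n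

def stirlingAdjoint (g : ℕ → ℚ) (k : ℕ) : ℚ := k * g k - (k + 1) * g (k + 1)

theorem sum_range_stirlingCoeff_succ_mul (n : ℕ) (g : ℕ → ℚ) :
    ∑ k ∈ range (n + 2), stirlingCoeff (n + 1) k * g k =
      ∑ k ∈ range (n + 1), stirlingCoeff n k * stirlingAdjoint g k := by
  have shift : ∑ k ∈ range (n + 1), stirlingCoeff n k * (k * g k) =
      ∑ k ∈ range (n + 1), stirlingCoeff n (k + 1) * ((k + 1) * g (k + 1)) := by
    rw [← sum_range_stirlingCoeff_mul_of_lt (by omega : n < n + 2), sum_range_succ']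
    simp
  rw [sum_range_succ', stirlingCoeff_succ_zero, zero_mul, add_zero]
  calc _ = ∑ k ∈ range (n + 1), (stirlingCoeff n (k + 1) * ((k + 1) * g (k + 1)) -
        stirlingCoeff n k * ((k + 1) * g (k + 1))) :=
        sum_congr rfl fun k _ => by rw [stirlingCoeff_succ_succ]; ring
    _ = _ := by
        rw [sum_sub_distrib, ← shift, ← sum_sub_distrib]
        simp only [stirlingAdjoint, mul_sub]

def stirlingPairing (β : ℕ → ℕ → ℚ) (n m : ℕ) : ℚ :=
  ∑ k ∈ range (n + 1), ∑ l ∈ range (m + 1), stirlingCoeff n k * stirlingCoeff m l * β k l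

theorem stirlingPairing_flip (β : ℕ → ℕ → ℚ) (n m : ℕ) :
    stirlingPairing (flip β) m n = stirlingPairing β n m := by
  rw [stirlingPairing, sum_comm]
  exact sum_congr rfl fun k _ => sum_congr rfl fun l _ => by rw [flip, mul_comm (stirlingCoeff m l)]

theorem stirlingPairing_succ_right (β : ℕ → ℕ → ℚ) (n m : ℕ) :
    stirlingPairing β n (m + 1) = stirlingPairing (fun k => stirlingAdjoint (β k)) n m := by
  refine sum_congr rfl fun k _ => ?_
  simp only [mul_assoc, ← mul_sum]
  rw [sum_range_stirlingCoeff_succ_mul]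

theorem stirlingPairing_succ_left (β : ℕ → ℕ → ℚ) (n m : ℕ) :
    stirlingPairing β (n + 1) m = stirlingPairing (fun k l => stirlingAdjoint (β · l) k) n m := by
  rw [← stirlingPairing_flip, stirlingPairing_succ_right, ← stirlingPairing_flip]
  rfl

theorem stirlingPairing_zero_left (β : ℕ → ℕ → ℚ) (n : ℕ) :
    stirlingPairing β 0 n = ∑ l ∈ range (n + 1), stirlingCoeff n l * β 0 l := by
  simp [stirlingPairing]

theorem stirlingPairing_eq_zero_left_add {β : ℕ → ℕ → ℚ}
    (hβ : ∀ k l, stirlingAdjoint (β · l) k = stirlingAdjoint (β k) l) (n m : ℕ) :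
    stirlingPairing β n m = stirlingPairing β 0 (n + m) := by
  induction n generalizing m with
  | zero => rw [zero_add]
  | succ n ih =>
    rw [stirlingPairing_succ_left, funext₂ hβ, ← stirlingPairing_succ_right, ih,
      Nat.succ_add_eq_add_succ]

def betaCoeff (k l : ℕ) : ℚ := (k ! * l ! : ℚ) / (k + l + 1)!

theorem betaCoeff_zero_left (l : ℕ) : betaCoeff 0 l = (l + 1 : ℚ)⁻¹ := by
  rw [betaCoeff, zero_add, Nat.factorial_succ]
  field_simp
  push_cast
  ring

theorem betaCoeff_eq_inv_mul_choose (k l : ℕ) :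
    betaCoeff k l = ((k + l + 1 : ℚ) * (k + l).choose l)⁻¹ := by
  have h := Nat.choose_mul_factorial_mul_factorial (Nat.le_add_left l k)
  rw [Nat.add_sub_cancel] at h
  have hc : ((k + l).choose l : ℚ) ≠ 0 :=
    Nat.cast_ne_zero.2 (Nat.choose_pos (Nat.le_add_left l k)).ne'
  rw [betaCoeff, Nat.factorial_succ, ← h]
  push_cast
  field_simp

theorem stirlingAdjoint_betaCoeff_left_eq_right (k l : ℕ) :
    stirlingAdjoint (betaCoeff · l) k = stirlingAdjoint (betaCoeff k) l := by
  simp only [stirlingAdjoint, betaCoeff, add_right_comm k 1 l, ← add_assoc, Nat.factorial_succ]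
  field_simp
  push_cast
  ring

theorem bernoulli_add_eq_double_sum (m n : ℕ) :
    bernoulli (m + n) =
      ∑ k ∈ Finset.range (n + 1), ∑ l ∈ Finset.range (m + 1),
        (-1 : ℚ) ^ (k + l) * (Nat.factorial k) * (Nat.factorial l) *
          (stirling2 n k) * (stirling2 m l) /
            ((k + l + 1) * ((k + l).choose l)) := by
  have pairing : stirlingPairing betaCoeff n m = bernoulli (m + n) := by
    rw [stirlingPairing_eq_zero_left_add stirlingAdjoint_betaCoeff_left_eq_right,
      stirlingPairing_zero_left, Nat.add_comm n m, bernoulli_eq_sum_stirlingCoeff_div]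
    simp only [betaCoeff_zero_left, div_eq_mul_inv]
  rw [← pairing, stirlingPairing, stirling2_eq_stirlingSecond]
  refine sum_congr rfl fun k _ => sum_congr rfl fun l _ => ?_
  rw [betaCoeff_eq_inv_mul_choose, stirlingCoeff, stirlingCoeff, pow_add]
  ring
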